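/- arXiv:2604.03909 — 6 statements merged into one kernel-verified Lean document; each statement's English description precedes it below -/
import Mathlib

section
/- Pairing identity: suppose the vectors X_0, …, X_T ∈ ℝ^d satisfy the forward recursion X_t = Σ_{s=1}^{t} A_{t,s} X_{t-s} + B_t for 1 ≤ t ≤ T, the vectors Z_t ∈ ℝ^m satisfy Z_t = C_t X_t + W_t for 0 ≤ t ≤ T-1, and y_0, …, y_T ∈ ℝ^d solve the backward difference equation with control u and terminal condition y_T = f. Then for every μ_0 ∈ ℝ^d, f^⊤ X_T − ( y_0^⊤ μ_0 − Σ_{t=0}^{T-1} u_t^⊤ Z_t ) = y_0^⊤ (X_0 − μ_0) + Σ_{t=1}^{T} y_t^⊤ B_t + Σ_{t=0}^{T-1} u_t^⊤ W_t. -/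
open Matrix Finset

/-- The backward difference equation (dual control system): `y_T = f` and
`y_t = ∑_{s=1}^{T-t} A_{t+s,s}ᵀ y_{t+s} + C_tᵀ u_t` for every `0 ≤ t ≤ T-1`. -/
def IsDualSol (T d m : ℕ) (A : ℕ → ℕ → Matrix (Fin d) (Fin d) ℝ)
    (C : ℕ → Matrix (Fin m) (Fin d) ℝ) (u : ℕ → Fin m → ℝ) (f : Fin d → ℝ)
    (y : ℕ → Fin d → ℝ) : Prop :=
  y T = f ∧
    ∀ t < T, y t =
      (∑ s ∈ Finset.Icc 1 (T - t), ((A (t + s) s)ᵀ).mulVec (y (t + s)))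
        + ((C t)ᵀ).mulVec (u t)


lemma transpose_mulVec_dot {d e : ℕ} (M : Matrix (Fin d) (Fin e) ℝ)
    (v : Fin d → ℝ) (w : Fin e → ℝ) :
    (Mᵀ.mulVec v) ⬝ᵥ w = v ⬝ᵥ (M.mulVec w) := by
  rw [mulVec_transpose, dotProduct_mulVec]

lemma dot_sum_right {d : ℕ} (s : Finset ℕ) (v : Fin d → ℝ) (w : ℕ → Fin d → ℝ) :
    v ⬝ᵥ (∑ i ∈ s, w i) = ∑ i ∈ s, v ⬝ᵥ w i := by
  simp only [dotProduct, Finset.sum_apply, Finset.mul_sum]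
  rw [Finset.sum_comm]

lemma sum_dot_left {d : ℕ} (s : Finset ℕ) (v : ℕ → Fin d → ℝ) (w : Fin d → ℝ) :
    (∑ i ∈ s, v i) ⬝ᵥ w = ∑ i ∈ s, v i ⬝ᵥ w := by
  simp only [dotProduct, Finset.sum_apply, Finset.sum_mul]
  rw [Finset.sum_comm]

lemma double_sum_swap (T d : ℕ) (A : ℕ → ℕ → Matrix (Fin d) (Fin d) ℝ)
    (X : ℕ → Fin d → ℝ) (y : ℕ → Fin d → ℝ) :
    ∑ t ∈ Icc 1 T, ∑ s ∈ Icc 1 t, y t ⬝ᵥ (A t s).mulVec (X (t - s))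
      = ∑ t ∈ range T, ∑ s ∈ Icc 1 (T - t), y (t + s) ⬝ᵥ (A (t + s) s).mulVec (X t) := by
  rw [Finset.sum_sigma', Finset.sum_sigma']
  apply Finset.sum_nbij' (i := fun p => (⟨p.1 - p.2, p.2⟩ : Σ _ : ℕ, ℕ))
    (j := fun p => (⟨p.1 + p.2, p.2⟩ : Σ _ : ℕ, ℕ))
  · rintro ⟨t, s⟩ hp
    simp only [Finset.mem_sigma, Finset.mem_Icc, Finset.mem_range] at hp ⊢
    omega
  · rintro ⟨t, s⟩ hp
    simp only [Finset.mem_sigma, Finset.mem_Icc, Finset.mem_range] at hp ⊢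
    omega
  · rintro ⟨t, s⟩ hp
    simp only [Finset.mem_sigma, Finset.mem_Icc] at hp
    rw [show t - s + s = t from by omega]
  · rintro ⟨t, s⟩ hp
    rw [Nat.add_sub_cancel]
  · rintro ⟨t, s⟩ hp
    simp only [Finset.mem_sigma, Finset.mem_Icc] at hp
    have h : t - s + s = t := by omega
    simp [h]

/-- Pairing identity: suppose `X_0, …, X_T ∈ ℝ^d` satisfy the forward recursion
`X_t = ∑_{s=1}^{t} A_{t,s} X_{t-s} + B_t` for `1 ≤ t ≤ T`, the vectors `Z_t ∈ ℝ^m`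
satisfy `Z_t = C_t X_t + W_t` for `0 ≤ t ≤ T-1`, and `y_0, …, y_T` solve the backward
difference equation with control `u` and terminal condition `y_T = f`. Then for every
`μ0 ∈ ℝ^d`,
`fᵀ X_T − (y_0ᵀ μ0 − ∑_{t=0}^{T-1} u_tᵀ Z_t)
  = y_0ᵀ (X_0 − μ0) + ∑_{t=1}^{T} y_tᵀ B_t + ∑_{t=0}^{T-1} u_tᵀ W_t`. -/
theorem pairing_identity
    (T d m : ℕ) (hT : 1 ≤ T) (hd : 1 ≤ d) (hm : 1 ≤ m)
    (A : ℕ → ℕ → Matrix (Fin d) (Fin d) ℝ)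
    (C : ℕ → Matrix (Fin m) (Fin d) ℝ)
    (X B : ℕ → Fin d → ℝ) (Z W : ℕ → Fin m → ℝ)
    (u : ℕ → Fin m → ℝ) (f : Fin d → ℝ) (y : ℕ → Fin d → ℝ) (μ0 : Fin d → ℝ)
    (hX : ∀ t, 1 ≤ t → t ≤ T →
      X t = (∑ s ∈ Finset.Icc 1 t, (A t s).mulVec (X (t - s))) + B t)
    (hZ : ∀ t < T, Z t = (C t).mulVec (X t) + W t)
    (hy : IsDualSol T d m A C u f y) :
    f ⬝ᵥ X T - (y 0 ⬝ᵥ μ0 - ∑ t ∈ Finset.range T, u t ⬝ᵥ Z t)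
      = y 0 ⬝ᵥ (X 0 - μ0) + (∑ t ∈ Finset.Icc 1 T, y t ⬝ᵥ B t)
        + ∑ t ∈ Finset.range T, u t ⬝ᵥ W t := by
  obtain ⟨hyT, hyt⟩ := hy
  -- forward expansion
  have h1 : ∑ t ∈ Icc 1 T, y t ⬝ᵥ X t
      = (∑ t ∈ Icc 1 T, ∑ s ∈ Icc 1 t, y t ⬝ᵥ (A t s).mulVec (X (t - s)))
        + ∑ t ∈ Icc 1 T, y t ⬝ᵥ B t := by
    rw [← Finset.sum_add_distrib]
    apply Finset.sum_congr rfl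
    intro t ht
    rw [Finset.mem_Icc] at ht
    rw [hX t ht.1 ht.2, dotProduct_add, dot_sum_right]
  -- backward expansion
  have h2 : ∑ t ∈ range T, y t ⬝ᵥ X t
      = (∑ t ∈ range T, ∑ s ∈ Icc 1 (T - t), y (t + s) ⬝ᵥ (A (t + s) s).mulVec (X t))
        + ∑ t ∈ range T, u t ⬝ᵥ (C t).mulVec (X t) := by
    rw [← Finset.sum_add_distrib]
    apply Finset.sum_congr rfl
    intro t ht
    rw [Finset.mem_range] at ht
    rw [hyt t ht, add_dotProduct, sum_dot_left, transpose_mulVec_dot]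
    congr 1
    apply Finset.sum_congr rfl
    intro s _
    rw [transpose_mulVec_dot]
  -- split identity between Icc 1 T and range T sums
  have hsplit : y T ⬝ᵥ X T + ∑ t ∈ range T, y t ⬝ᵥ X t
      = y 0 ⬝ᵥ X 0 + ∑ t ∈ Icc 1 T, y t ⬝ᵥ X t := by
    have e1 : ∑ t ∈ range (T + 1), y t ⬝ᵥ X t
        = (∑ t ∈ range T, y t ⬝ᵥ X t) + y T ⬝ᵥ X T := Finset.sum_range_succ _ _
    have e2 : ∑ t ∈ range (T + 1), y t ⬝ᵥ X t
        = (∑ t ∈ range T, y (t + 1) ⬝ᵥ X (t + 1)) + y 0 ⬝ᵥ X 0 :=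
      Finset.sum_range_succ' _ _
    have e3 : ∑ t ∈ Icc 1 T, y t ⬝ᵥ X t
        = ∑ t ∈ range T, y (t + 1) ⬝ᵥ X (t + 1) := by
      apply Finset.sum_nbij' (i := fun t => t - 1) (j := fun t => t + 1)
      · intro t ht; rw [Finset.mem_Icc] at ht; rw [Finset.mem_range]; omega
      · intro t ht; rw [Finset.mem_range] at ht; rw [Finset.mem_Icc]; omega
      · intro t ht; rw [Finset.mem_Icc] at ht; omega
      · intro t ht; omega
      · intro t ht; rw [Finset.mem_Icc] at ht
        rw [show t - 1 + 1 = t from by omega]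
    linarith [e1, e2, e3.symm]
  have hswap := double_sum_swap T d A X y
  have hkey : y T ⬝ᵥ X T - y 0 ⬝ᵥ X 0
      = (∑ t ∈ Icc 1 T, y t ⬝ᵥ B t) - ∑ t ∈ range T, u t ⬝ᵥ (C t).mulVec (X t) := by
    linarith [h1, h2, hswap, hsplit]
  have hZsum : ∑ t ∈ range T, u t ⬝ᵥ Z t
      = (∑ t ∈ range T, u t ⬝ᵥ (C t).mulVec (X t)) + ∑ t ∈ range T, u t ⬝ᵥ W t := by
    rw [← Finset.sum_add_distrib]
    apply Finset.sum_congr rfl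
    intro t ht
    rw [Finset.mem_range] at ht
    rw [hZ t ht, dotProduct_add]
  rw [← hyT, dotProduct_sub]
  linarith [hkey, hZsum]
end

section
/- Unbiasedness of the dual estimator: under the stochastic model with E[X_0] = μ_0, E[B_t] = 0 for 1 ≤ t ≤ T, and E[W_t] = 0 for 0 ≤ t ≤ T-1, the estimator S_T := y_0^⊤ μ_0 − Σ_{t=0}^{T-1} u_t^⊤ Z_t satisfies E[S_T] = E[f^⊤ X_T], where y solves the backward difference equation with control u and terminal condition f. -/
open Matrix Finset MeasureTheory

/-- double-sum reindexing: `(t, s) ↦ (t + s, s)`. -/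
lemma sum_swap_aux (T : ℕ) (F : ℕ → ℕ → ℝ) :
    ∑ t ∈ Finset.range T, ∑ s ∈ Finset.Icc 1 (T - t), F (t + s) s
      = ∑ r ∈ Finset.Icc 1 T, ∑ s ∈ Finset.Icc 1 r, F r s := by
  rw [Finset.sum_sigma', Finset.sum_sigma']
  refine Finset.sum_nbij' (fun p => ⟨p.1 + p.2, p.2⟩) (fun p => ⟨p.1 - p.2, p.2⟩)
    ?_ ?_ ?_ ?_ ?_
  · rintro ⟨a, b⟩ h
    simp only [Finset.mem_sigma, Finset.mem_range, Finset.mem_Icc] at h ⊢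
    omega
  · rintro ⟨a, b⟩ h
    simp only [Finset.mem_sigma, Finset.mem_range, Finset.mem_Icc] at h ⊢
    omega
  · rintro ⟨a, b⟩ h
    simp only [Finset.mem_sigma, Finset.mem_range, Finset.mem_Icc] at h
    have : a + b - b = a := by omega
    simp [this]
  · rintro ⟨a, b⟩ h
    simp only [Finset.mem_sigma, Finset.mem_range, Finset.mem_Icc] at h
    have : a - b + b = a := by omega
    simp [this]
  · rintro ⟨a, b⟩ h
    rfl

lemma dotProduct_sum' {n : ℕ} {ι : Type*} (s : Finset ι) (v : Fin n → ℝ)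
    (w : ι → Fin n → ℝ) : v ⬝ᵥ (∑ i ∈ s, w i) = ∑ i ∈ s, v ⬝ᵥ w i := by
  simp only [dotProduct, Finset.sum_apply, Finset.mul_sum]
  exact Finset.sum_comm

lemma sum_dotProduct' {n : ℕ} {ι : Type*} (s : Finset ι) (v : Fin n → ℝ)
    (w : ι → Fin n → ℝ) : (∑ i ∈ s, w i) ⬝ᵥ v = ∑ i ∈ s, w i ⬝ᵥ v := by
  simp only [dotProduct, Finset.sum_apply, Finset.sum_mul]
  exact Finset.sum_comm

/-- integrability of a dot product with a deterministic vector -/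
lemma integrable_dot {n : ℕ} {Ω : Type*} [MeasurableSpace Ω] (μ : Measure Ω)
    (v : Fin n → ℝ) {g : Ω → Fin n → ℝ} (h : ∀ i, Integrable (fun ω => g ω i) μ) :
    Integrable (fun ω => v ⬝ᵥ g ω) μ := by
  simp only [dotProduct]
  exact integrable_finset_sum _ fun i _ => (h i).const_mul _

lemma integral_dot {n : ℕ} {Ω : Type*} [MeasurableSpace Ω] (μ : Measure Ω)
    (v : Fin n → ℝ) {g : Ω → Fin n → ℝ} (h : ∀ i, Integrable (fun ω => g ω i) μ) :
    (∫ ω, v ⬝ᵥ g ω ∂μ) = ∑ i, v i * ∫ ω, g ω i ∂μ := by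
  simp only [dotProduct]
  rw [integral_finset_sum _ fun i _ => (h i).const_mul _]
  simp [integral_const_mul]

/-- Unbiasedness of the dual estimator: under the stochastic model with `E[X_0] = μ0`,
`E[B_t] = 0` for `1 ≤ t ≤ T`, and `E[W_t] = 0` for `0 ≤ t ≤ T-1`, the estimator
`S_T := y_0ᵀ μ0 − ∑_{t=0}^{T-1} u_tᵀ Z_t` satisfies `E[S_T] = E[fᵀ X_T]`, where `y`
solves the backward difference equation with control `u` and terminal condition `f`. -/
theorem dual_estimator_unbiased
    (T d m : ℕ) (hT : 1 ≤ T) (hd : 1 ≤ d) (hm : 1 ≤ m)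
    {Ω : Type*} [MeasurableSpace Ω] (μ : Measure Ω) [IsProbabilityMeasure μ]
    (A : ℕ → ℕ → Matrix (Fin d) (Fin d) ℝ)
    (C : ℕ → Matrix (Fin m) (Fin d) ℝ)
    (X B : ℕ → Ω → Fin d → ℝ) (Z W : ℕ → Ω → Fin m → ℝ)
    (u : ℕ → Fin m → ℝ) (f : Fin d → ℝ) (y : ℕ → Fin d → ℝ) (μ0 : Fin d → ℝ)
    -- integrability of the primitive random vectors (componentwise)
    (hX0int : ∀ i, Integrable (fun ω => X 0 ω i) μ)
    (hBint : ∀ t, 1 ≤ t → t ≤ T → ∀ i, Integrable (fun ω => B t ω i) μ)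
    (hWint : ∀ t < T, ∀ j, Integrable (fun ω => W t ω j) μ)
    -- first moments
    (hX0mean : ∀ i, (∫ ω, X 0 ω i ∂μ) = μ0 i)
    (hBmean : ∀ t, 1 ≤ t → t ≤ T → ∀ i, (∫ ω, B t ω i ∂μ) = 0)
    (hWmean : ∀ t < T, ∀ j, (∫ ω, W t ω j ∂μ) = 0)
    -- the hidden-state recursion and the observation model
    (hX : ∀ t, 1 ≤ t → t ≤ T → ∀ ω,
      X t ω = (∑ s ∈ Finset.Icc 1 t, (A t s).mulVec (X (t - s) ω)) + B t ω)
    (hZ : ∀ t < T, ∀ ω, Z t ω = (C t).mulVec (X t ω) + W t ω)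
    -- `y` solves the backward difference equation for `(u, f)`
    (hy : IsDualSol T d m A C u f y) :
    (∫ ω, (y 0 ⬝ᵥ μ0 - ∑ t ∈ Finset.range T, u t ⬝ᵥ Z t ω) ∂μ)
      = ∫ ω, f ⬝ᵥ X T ω ∂μ := by
  -- integrability of every state
  have hXint : ∀ t, t ≤ T → ∀ i, Integrable (fun ω => X t ω i) μ := by
    intro t
    induction t using Nat.strong_induction_on with
    | _ t ih =>
      intro htT i
      rcases Nat.eq_zero_or_pos t with h0 | h1
      · subst h0; exact hX0int i
      · have heq : (fun ω => X t ω i)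
            = fun ω => (∑ s ∈ Finset.Icc 1 t,
                ∑ j, A t s i j * X (t - s) ω j) + B t ω i := by
          funext ω
          rw [hX t h1 htT ω]
          simp [Matrix.mulVec, dotProduct, Finset.sum_apply, Pi.add_apply]
        rw [heq]
        refine Integrable.add ?_ (hBint t h1 htT i)
        refine integrable_finset_sum _ fun s hs => integrable_finset_sum _ fun j _ => ?_
        refine ((ih (t - s) ?_ ?_ j).const_mul _)
        · simp only [Finset.mem_Icc] at hs; omega
        · omega
  -- the pointwise identity
  have key : ∀ ω, (y 0 ⬝ᵥ μ0 - ∑ t ∈ Finset.range T, u t ⬝ᵥ Z t ω)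
      = f ⬝ᵥ X T ω + (y 0 ⬝ᵥ μ0 - y 0 ⬝ᵥ X 0 ω)
        - (∑ r ∈ Finset.Icc 1 T, y r ⬝ᵥ B r ω)
        - (∑ t ∈ Finset.range T, u t ⬝ᵥ W t ω) := by
    intro ω
    have step1 : ∀ t ∈ Finset.range T,
        u t ⬝ᵥ Z t ω = (y t ⬝ᵥ X t ω
          - ∑ s ∈ Finset.Icc 1 (T - t), y (t + s) ⬝ᵥ (A (t + s) s).mulVec (X t ω))
          + u t ⬝ᵥ W t ω := by
      intro t ht
      rw [Finset.mem_range] at ht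
      rw [hZ t ht ω, dotProduct_add]
      congr 1
      rw [dotProduct_mulVec, ← Matrix.mulVec_transpose]
      have := hy.2 t ht
      calc ((C t)ᵀ).mulVec (u t) ⬝ᵥ X t ω
          = (y t - ∑ s ∈ Finset.Icc 1 (T - t),
              ((A (t + s) s)ᵀ).mulVec (y (t + s))) ⬝ᵥ X t ω := by
            congr 1
            rw [this]; abel
        _ = y t ⬝ᵥ X t ω - ∑ s ∈ Finset.Icc 1 (T - t),
              y (t + s) ⬝ᵥ (A (t + s) s).mulVec (X t ω) := by
            rw [sub_dotProduct, sum_dotProduct']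
            congr 1
            refine Finset.sum_congr rfl fun s _ => ?_
            rw [dotProduct_mulVec, ← Matrix.mulVec_transpose]
    rw [Finset.sum_congr rfl step1, Finset.sum_add_distrib, Finset.sum_sub_distrib]
    have swap : ∑ t ∈ Finset.range T, ∑ s ∈ Finset.Icc 1 (T - t),
          y (t + s) ⬝ᵥ (A (t + s) s).mulVec (X t ω)
        = ∑ r ∈ Finset.Icc 1 T, ∑ s ∈ Finset.Icc 1 r,
          y r ⬝ᵥ (A r s).mulVec (X (r - s) ω) := by
      have := sum_swap_aux T (fun r s => y r ⬝ᵥ (A r s).mulVec (X (r - s) ω))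
      simpa using this
    rw [swap]
    have inner : ∀ r ∈ Finset.Icc 1 T,
        ∑ s ∈ Finset.Icc 1 r, y r ⬝ᵥ (A r s).mulVec (X (r - s) ω)
          = y r ⬝ᵥ X r ω - y r ⬝ᵥ B r ω := by
      intro r hr
      rw [Finset.mem_Icc] at hr
      rw [← dotProduct_sum', eq_sub_iff_add_eq, ← dotProduct_add]
      congr 1
      rw [hX r hr.1 hr.2 ω]
    rw [Finset.sum_congr rfl inner, Finset.sum_sub_distrib]
    -- telescoping
    have tele : ∑ t ∈ Finset.range T, y t ⬝ᵥ X t ω - ∑ r ∈ Finset.Icc 1 T, y r ⬝ᵥ X r ω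
        = y 0 ⬝ᵥ X 0 ω - y T ⬝ᵥ X T ω := by
      have h1 : ∑ t ∈ Finset.range (T + 1), y t ⬝ᵥ X t ω
          = ∑ t ∈ Finset.range T, y t ⬝ᵥ X t ω + y T ⬝ᵥ X T ω :=
        Finset.sum_range_succ _ T
      have h2 : ∑ t ∈ Finset.range (T + 1), y t ⬝ᵥ X t ω
          = y 0 ⬝ᵥ X 0 ω + ∑ r ∈ Finset.Icc 1 T, y r ⬝ᵥ X r ω := by
        rw [Finset.sum_range_succ' (fun t => y t ⬝ᵥ X t ω) T, ← Finset.Ico_add_one_right_eq_Icc,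
          Finset.sum_Ico_eq_sum_range]
        simp [add_comm]
      linarith
    have hyT : y T = f := hy.1
    rw [hyT] at tele
    linarith [tele]
  -- integrate
  rw [integral_congr_ae (Filter.Eventually.of_forall key)]
  have I1 : Integrable (fun ω => f ⬝ᵥ X T ω) μ :=
    integrable_dot μ f (hXint T le_rfl)
  have I2 : Integrable (fun ω => y 0 ⬝ᵥ μ0 - y 0 ⬝ᵥ X 0 ω) μ :=
    (integrable_const _).sub (integrable_dot μ _ hX0int)
  have I3 : Integrable (fun ω => ∑ r ∈ Finset.Icc 1 T, y r ⬝ᵥ B r ω) μ := by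
    refine integrable_finset_sum _ fun r hr => ?_
    rw [Finset.mem_Icc] at hr
    exact integrable_dot μ _ (hBint r hr.1 hr.2)
  have I4 : Integrable (fun ω => ∑ t ∈ Finset.range T, u t ⬝ᵥ W t ω) μ := by
    refine integrable_finset_sum _ fun t ht => ?_
    rw [Finset.mem_range] at ht
    exact integrable_dot μ _ (hWint t ht)
  have I12 : Integrable (fun ω => f ⬝ᵥ X T ω + (y 0 ⬝ᵥ μ0 - y 0 ⬝ᵥ X 0 ω)) μ := I1.add I2
  have I123 : Integrable (fun ω => f ⬝ᵥ X T ω + (y 0 ⬝ᵥ μ0 - y 0 ⬝ᵥ X 0 ω)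
      - ∑ r ∈ Finset.Icc 1 T, y r ⬝ᵥ B r ω) μ := I12.sub I3
  rw [integral_sub I123 I4, integral_sub I12 I3, integral_add I1 I2]
  have e2 : (∫ ω, (y 0 ⬝ᵥ μ0 - y 0 ⬝ᵥ X 0 ω) ∂μ) = 0 := by
    rw [integral_sub (integrable_const _) (integrable_dot μ _ hX0int),
      integral_const, integral_dot μ _ hX0int]
    simp [hX0mean, dotProduct]
  have e3 : (∫ ω, ∑ r ∈ Finset.Icc 1 T, y r ⬝ᵥ B r ω ∂μ) = 0 := by
    rw [integral_finset_sum _ fun r hr => ?_]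
    · refine Finset.sum_eq_zero fun r hr => ?_
      rw [Finset.mem_Icc] at hr
      rw [integral_dot μ _ (hBint r hr.1 hr.2)]
      simp [hBmean r hr.1 hr.2]
    · rw [Finset.mem_Icc] at hr
      exact integrable_dot μ _ (hBint r hr.1 hr.2)
  have e4 : (∫ ω, ∑ t ∈ Finset.range T, u t ⬝ᵥ W t ω ∂μ) = 0 := by
    rw [integral_finset_sum _ fun t ht => ?_]
    · refine Finset.sum_eq_zero fun t ht => ?_
      rw [Finset.mem_range] at ht
      rw [integral_dot μ _ (hWint t ht)]
      simp [hWmean t ht]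
    · rw [Finset.mem_range] at ht
      exact integrable_dot μ _ (hWint t ht)
  rw [e2, e3, e4]
  ring
end

section
/- Duality principle (Theorem 1): let y solve the backward difference equation with control u ∈ 𝒰 and terminal condition y_T = f ∈ ℝ^d, and define the estimator S_T := y_0^⊤ μ_0 − Σ_{t=0}^{T-1} u_t^⊤ Z_t. Then the dual optimal control cost equals the mean-squared prediction error: J_T(u; f) = E[ ½ | f^⊤ X_T − S_T |² ]. -/
/-!
Pairing the state recursion with `y` and the backward equation with `X`, the two double sums
coincide after the substitution `r = t - s`, which leaves the pathwise identity
`fᵀ X_T - S_T = y_0ᵀ (X_0 - μ_0) + ∑_{t=1}^T y_tᵀ B_t + ∑_{t<T} u_tᵀ W_t`.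
The summands are centred functions of the independent primitives, so the second moment of their
sum is the sum of their second moments `y_0ᵀ Σ_0 y_0`, `y_tᵀ Q_t y_t` and `u_tᵀ R_t u_t`, that is
`2 J_T(u; f)`.
-/

open Matrix Finset MeasureTheory ProbabilityTheory

/-- The dual optimal control cost
`J_T(u; f) = ½ y_0ᵀ Σ0 y_0 + ∑_{t=1}^{T} ½ y_tᵀ Q_t y_t + ∑_{t=0}^{T-1} ½ u_tᵀ R_t u_t`,
expressed in terms of the dual-state solution `y` for `(u, f)`. -/
noncomputable def dualCost (T d m : ℕ) (Sig0 : Matrix (Fin d) (Fin d) ℝ)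
    (Q : ℕ → Matrix (Fin d) (Fin d) ℝ) (R : ℕ → Matrix (Fin m) (Fin m) ℝ)
    (y : ℕ → Fin d → ℝ) (u : ℕ → Fin m → ℝ) : ℝ :=
  (1 / 2) * (y 0 ⬝ᵥ Sig0.mulVec (y 0))
    + (∑ t ∈ Finset.Icc 1 T, (1 / 2) * (y t ⬝ᵥ (Q t).mulVec (y t)))
    + ∑ t ∈ Finset.range T, (1 / 2) * (u t ⬝ᵥ (R t).mulVec (u t))

/-- Values of the family of primitive random vectors `(X_0, B_1, …, B_T, W_0, …, W_{T-1})`. -/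
def noiseType (d m : ℕ) {T : ℕ} : Fin (T + 1) ⊕ Fin T → Type :=
  Sum.elim (fun _ => Fin d → ℝ) (fun _ => Fin m → ℝ)

/-- The canonical measurable-space structure on each member of the family. -/
def noiseMS (T d m : ℕ) : (i : Fin (T + 1) ⊕ Fin T) → MeasurableSpace (noiseType d m i)
  | Sum.inl _ => (inferInstance : MeasurableSpace (Fin d → ℝ))
  | Sum.inr _ => (inferInstance : MeasurableSpace (Fin m → ℝ))

/-- The family of primitive random vectors `(X_0, B_1, …, B_T, W_0, …, W_{T-1})`. -/
def noiseFamily (T d m : ℕ) {Ω : Type*} (X0 : Ω → Fin d → ℝ)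
    (B : ℕ → Ω → Fin d → ℝ) (W : ℕ → Ω → Fin m → ℝ) :
    (i : Fin (T + 1) ⊕ Fin T) → Ω → noiseType d m i
  | Sum.inl j => if j.val = 0 then X0 else B j.val
  | Sum.inr t => W t.val

section Moments

variable {Ω : Type*} [MeasurableSpace Ω] {μ : Measure Ω} {n : ℕ}

lemma memLp_dotProduct {G : Ω → Fin n → ℝ} (hG : ∀ k, MemLp (fun ω => G ω k) 2 μ)
    (v : Fin n → ℝ) : MemLp (fun ω => v ⬝ᵥ G ω) 2 μ :=
  memLp_finsetSum _ fun k _ => (hG k).const_mul (v k)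

lemma integral_dotProduct {G : Ω → Fin n → ℝ} (hG : ∀ k, Integrable (fun ω => G ω k) μ)
    (v : Fin n → ℝ) : ∫ ω, v ⬝ᵥ G ω ∂μ = v ⬝ᵥ fun k => ∫ ω, G ω k ∂μ := by
  simp only [dotProduct]
  rw [integral_finsetSum _ fun k _ => (hG k).const_mul (v k)]
  simp only [integral_const_mul]

lemma integral_dotProduct_sq {G : Ω → Fin n → ℝ} (hG : ∀ k, MemLp (fun ω => G ω k) 2 μ)
    {M : Matrix (Fin n) (Fin n) ℝ} (hM : ∀ k l, ∫ ω, G ω k * G ω l ∂μ = M k l)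
    (v : Fin n → ℝ) : ∫ ω, (v ⬝ᵥ G ω) ^ 2 ∂μ = v ⬝ᵥ M *ᵥ v := by
  have hint : ∀ k l, Integrable (fun ω => v k * v l * (G ω k * G ω l)) μ := fun k l =>
    ((hG k).integrable_mul (hG l)).const_mul _
  calc ∫ ω, (v ⬝ᵥ G ω) ^ 2 ∂μ = ∫ ω, ∑ k, ∑ l, v k * v l * (G ω k * G ω l) ∂μ := by
        congr 1 with ω
        simp only [dotProduct, sq, sum_mul_sum]
        exact sum_congr rfl fun k _ => sum_congr rfl fun l _ => by ring
    _ = ∑ k, ∑ l, v k * v l * M k l := by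
        rw [integral_finsetSum _ fun k _ => integrable_finsetSum _ fun l _ => hint k l]
        refine sum_congr rfl fun k _ => ?_
        rw [integral_finsetSum _ fun l _ => hint k l]
        simp only [integral_const_mul, hM]
    _ = v ⬝ᵥ M *ᵥ v := by
        simp only [dotProduct, mulVec, mul_sum]
        exact sum_congr rfl fun k _ => sum_congr rfl fun l _ => by ring

lemma integral_sum_sq_of_pairwise_indepFun [IsFiniteMeasure μ] {ι : Type*} [Fintype ι]
    {ξ : ι → Ω → ℝ}
    (hL2 : ∀ i, MemLp (ξ i) 2 μ) (hmean : ∀ i, ∫ ω, ξ i ω ∂μ = 0)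
    (hindep : Pairwise fun i j => IndepFun (ξ i) (ξ j) μ) :
    ∫ ω, (∑ i, ξ i ω) ^ 2 ∂μ = ∑ i, ∫ ω, ξ i ω ^ 2 ∂μ := by
  have hsum_mean : ∫ ω, ∑ i, ξ i ω ∂μ = 0 := by
    rw [integral_finsetSum _ fun i _ => (hL2 i).integrable one_le_two]
    simp [hmean]
  have hvar := IndepFun.variance_sum (s := univ) (fun i _ => hL2 i)
    fun i _ j _ hij => hindep hij
  rw [variance_eq_integral (memLp_finsetSum' _ fun i _ => hL2 i).aemeasurable] at hvar
  simp only [Finset.sum_apply, hsum_mean, sub_zero] at hvar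
  rw [hvar]
  refine sum_congr rfl fun i _ => ?_
  simp only [variance_eq_integral (hL2 i).aemeasurable, hmean, sub_zero]

end Moments

lemma sum_Icc_one_eq_sum_range {M : Type*} [AddCommMonoid M] (T : ℕ) (g : ℕ → M) :
    ∑ t ∈ Icc 1 T, g t = ∑ t ∈ range T, g (t + 1) := by
  rw [range_eq_Ico, sum_Ico_add' g 0 T 1, zero_add, Finset.Ico_add_one_right_eq_Icc]

lemma sum_Icc_sum_Icc_eq_sum_range_sum_Icc {M : Type*} [AddCommMonoid M] (T : ℕ)
    (g : ℕ → ℕ → M) :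
    ∑ t ∈ Icc 1 T, ∑ s ∈ Icc 1 t, g t s = ∑ r ∈ range T, ∑ s ∈ Icc 1 (T - r), g (r + s) s := by
  rw [sum_sigma', sum_sigma']
  refine sum_nbij' (fun p => ⟨p.1 - p.2, p.2⟩) (fun p => ⟨p.1 + p.2, p.2⟩) ?_ ?_ ?_ ?_ ?_ <;>
    rintro ⟨t, s⟩ h <;> simp only [mem_Icc, mem_range, mem_sigma] at h ⊢
  · omega
  · omega
  · rw [Nat.sub_add_cancel h.2.2]
  · rw [Nat.add_sub_cancel]
  · rw [Nat.sub_add_cancel h.2.2]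

section DualSystem

variable {T d m : ℕ} {A : ℕ → ℕ → Matrix (Fin d) (Fin d) ℝ} {C : ℕ → Matrix (Fin m) (Fin d) ℝ}
  {u : ℕ → Fin m → ℝ} {f : Fin d → ℝ} {y : ℕ → Fin d → ℝ}

lemma IsDualSol.dotProduct_terminal_eq (hy : IsDualSol T d m A C u f y) {x b : ℕ → Fin d → ℝ}
    (hx : ∀ t, 1 ≤ t → t ≤ T → x t = ∑ s ∈ Icc 1 t, A t s *ᵥ x (t - s) + b t) :
    f ⬝ᵥ x T = y 0 ⬝ᵥ x 0 + ∑ t ∈ Icc 1 T, y t ⬝ᵥ b t - ∑ t ∈ range T, u t ⬝ᵥ C t *ᵥ x t := by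
  have hstate : ∑ t ∈ Icc 1 T, y t ⬝ᵥ x t
      = ∑ t ∈ Icc 1 T, ∑ s ∈ Icc 1 t, y t ⬝ᵥ A t s *ᵥ x (t - s) + ∑ t ∈ Icc 1 T, y t ⬝ᵥ b t := by
    rw [← sum_add_distrib]
    refine sum_congr rfl fun t ht => ?_
    rw [mem_Icc] at ht
    rw [hx t ht.1 ht.2, dotProduct_add, dotProduct_sum]
  have hdual : ∑ t ∈ range T, y t ⬝ᵥ x t
      = ∑ t ∈ Icc 1 T, ∑ s ∈ Icc 1 t, y t ⬝ᵥ A t s *ᵥ x (t - s)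
        + ∑ t ∈ range T, u t ⬝ᵥ C t *ᵥ x t := by
    rw [sum_Icc_sum_Icc_eq_sum_range_sum_Icc, ← sum_add_distrib]
    refine sum_congr rfl fun t ht => ?_
    rw [hy.2 t (mem_range.1 ht), add_dotProduct, sum_dotProduct]
    simp only [Nat.add_sub_cancel, dotProduct_comm _ (x t), dotProduct_transpose_mulVec]
  have hsplit := (sum_range_succ (fun t => y t ⬝ᵥ x t) T).symm.trans
    (sum_range_succ' (fun t => y t ⬝ᵥ x t) T)
  rw [hdual, hy.1, ← sum_Icc_one_eq_sum_range T fun t => y t ⬝ᵥ x t, hstate] at hsplit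
  linarith

lemma IsDualSol.estimationError_eq (hy : IsDualSol T d m A C u f y) {x b : ℕ → Fin d → ℝ}
    {z w : ℕ → Fin m → ℝ}
    (hx : ∀ t, 1 ≤ t → t ≤ T → x t = ∑ s ∈ Icc 1 t, A t s *ᵥ x (t - s) + b t)
    (hz : ∀ t < T, z t = C t *ᵥ x t + w t) (μ0 : Fin d → ℝ) :
    f ⬝ᵥ x T - (y 0 ⬝ᵥ μ0 - ∑ t ∈ range T, u t ⬝ᵥ z t)
      = y 0 ⬝ᵥ (x 0 - μ0) + ∑ t ∈ Icc 1 T, y t ⬝ᵥ b t + ∑ t ∈ range T, u t ⬝ᵥ w t := by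
  have hobs : ∑ t ∈ range T, u t ⬝ᵥ z t
      = ∑ t ∈ range T, u t ⬝ᵥ C t *ᵥ x t + ∑ t ∈ range T, u t ⬝ᵥ w t := by
    rw [← sum_add_distrib]
    exact sum_congr rfl fun t ht => by rw [hz t (mem_range.1 ht), dotProduct_add]
  rw [hy.dotProduct_terminal_eq hx, hobs, dotProduct_sub]
  ring

end DualSystem

lemma sum_fin_succ_sum_fin_eq {M : Type*} [AddCommMonoid M] {T : ℕ}
    (g : Fin (T + 1) ⊕ Fin T → M) {c : M} {a b : ℕ → M} (h0 : g (Sum.inl 0) = c)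
    (hsucc : ∀ j : Fin T, g (Sum.inl j.succ) = a (j + 1))
    (hinr : ∀ t : Fin T, g (Sum.inr t) = b t) :
    ∑ i, g i = c + ∑ t ∈ Icc 1 T, a t + ∑ t ∈ range T, b t := by
  rw [Fintype.sum_sum_type, Fin.sum_univ_succ, h0, sum_Icc_one_eq_sum_range,
    ← Fin.sum_univ_eq_sum_range (fun t => a (t + 1)), ← Fin.sum_univ_eq_sum_range b]
  simp only [hsucc, hinr]

section Noise

variable {T d m : ℕ} {Ω : Type*}
  {X0 : Ω → Fin d → ℝ} {B : ℕ → Ω → Fin d → ℝ} {W : ℕ → Ω → Fin m → ℝ}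
  {μ0 : Fin d → ℝ} {y : ℕ → Fin d → ℝ} {u : ℕ → Fin m → ℝ}

def noiseFunctional (T d m : ℕ) (μ0 : Fin d → ℝ) (y : ℕ → Fin d → ℝ) (u : ℕ → Fin m → ℝ) :
    (i : Fin (T + 1) ⊕ Fin T) → noiseType d m i → ℝ
  | Sum.inl j => fun x : Fin d → ℝ => if j.val = 0 then y 0 ⬝ᵥ (x - μ0) else y j ⬝ᵥ x
  | Sum.inr t => fun x : Fin m → ℝ => u t ⬝ᵥ x

lemma measurable_noiseFunctional :
    ∀ i, Measurable[noiseMS T d m i] (noiseFunctional T d m μ0 y u i)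
  | Sum.inl j => by
    show Measurable fun x : Fin d → ℝ => if j.val = 0 then y 0 ⬝ᵥ (x - μ0) else y j ⬝ᵥ x
    split_ifs <;> fun_prop
  | Sum.inr t => by
    show Measurable fun x : Fin m → ℝ => u t ⬝ᵥ x
    fun_prop

def weightedNoise (T d m : ℕ) (μ0 : Fin d → ℝ) (y : ℕ → Fin d → ℝ) (u : ℕ → Fin m → ℝ)
    (X0 : Ω → Fin d → ℝ) (B : ℕ → Ω → Fin d → ℝ) (W : ℕ → Ω → Fin m → ℝ)
    (i : Fin (T + 1) ⊕ Fin T) : Ω → ℝ :=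
  noiseFunctional T d m μ0 y u i ∘ noiseFamily T d m X0 B W i

lemma weightedNoise_inl_zero :
    weightedNoise T d m μ0 y u X0 B W (Sum.inl 0) = fun ω => y 0 ⬝ᵥ (X0 ω - μ0) :=
  rfl

lemma weightedNoise_inl_succ (j : Fin T) :
    weightedNoise T d m μ0 y u X0 B W (Sum.inl j.succ) = fun ω => y (j + 1) ⬝ᵥ B (j + 1) ω :=
  rfl

lemma weightedNoise_inr (t : Fin T) :
    weightedNoise T d m μ0 y u X0 B W (Sum.inr t) = fun ω => u t ⬝ᵥ W t ω :=
  rfl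

lemma sum_weightedNoise (ω : Ω) :
    ∑ i, weightedNoise T d m μ0 y u X0 B W i ω
      = y 0 ⬝ᵥ (X0 ω - μ0) + ∑ t ∈ Icc 1 T, y t ⬝ᵥ B t ω + ∑ t ∈ range T, u t ⬝ᵥ W t ω :=
  sum_fin_succ_sum_fin_eq _ rfl (fun _ => rfl) (fun _ => rfl)

variable [MeasurableSpace Ω] {μ : Measure Ω}

lemma iIndepFun_weightedNoise
    (hindep : iIndepFun (m := noiseMS T d m) (noiseFamily T d m X0 B W) μ) :
    iIndepFun (weightedNoise T d m μ0 y u X0 B W) μ :=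
  hindep.comp _ measurable_noiseFunctional

lemma memLp_weightedNoise [IsFiniteMeasure μ] (hX0 : ∀ i, MemLp (fun ω => X0 ω i) 2 μ)
    (hB : ∀ t, 1 ≤ t → t ≤ T → ∀ i, MemLp (fun ω => B t ω i) 2 μ)
    (hW : ∀ t < T, ∀ j, MemLp (fun ω => W t ω j) 2 μ) :
    ∀ i, MemLp (weightedNoise T d m μ0 y u X0 B W i) 2 μ := by
  rintro (j | t)
  · induction j using Fin.cases with
    | zero =>
      rw [weightedNoise_inl_zero]
      exact memLp_dotProduct (G := fun ω => X0 ω - μ0)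
        (fun k => (hX0 k).sub (memLp_const (μ0 k))) (y 0)
    | succ j =>
      rw [weightedNoise_inl_succ]
      exact memLp_dotProduct (hB _ (Nat.le_add_left 1 j) j.is_lt) (y (j + 1))
  · exact memLp_dotProduct (hW t t.is_lt) (u t)

lemma integral_weightedNoise [IsProbabilityMeasure μ] (hX0 : ∀ i, MemLp (fun ω => X0 ω i) 2 μ)
    (hB : ∀ t, 1 ≤ t → t ≤ T → ∀ i, MemLp (fun ω => B t ω i) 2 μ)
    (hW : ∀ t < T, ∀ j, MemLp (fun ω => W t ω j) 2 μ)
    (hX0mean : ∀ i, ∫ ω, X0 ω i ∂μ = μ0 i)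
    (hBmean : ∀ t, 1 ≤ t → t ≤ T → ∀ i, ∫ ω, B t ω i ∂μ = 0)
    (hWmean : ∀ t < T, ∀ j, ∫ ω, W t ω j ∂μ = 0) :
    ∀ i, ∫ ω, weightedNoise T d m μ0 y u X0 B W i ω ∂μ = 0 := by
  rintro (j | t)
  · induction j using Fin.cases with
    | zero =>
      have hX0int k := (hX0 k).integrable one_le_two
      have hcentered : (fun k => ∫ ω, (X0 ω - μ0) k ∂μ) = 0 := funext fun k => by
        simp [integral_sub (hX0int k) (integrable_const _), hX0mean]
      rw [weightedNoise_inl_zero, integral_dotProduct (G := fun ω => X0 ω - μ0)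
        (fun k => (hX0int k).sub (integrable_const (μ0 k))), hcentered, dotProduct_zero]
    | succ j =>
      rw [weightedNoise_inl_succ, integral_dotProduct (G := B (j + 1))
        fun k => (hB _ (Nat.le_add_left 1 j) j.is_lt k).integrable one_le_two]
      simp [hBmean _ (Nat.le_add_left 1 j) j.is_lt]
  · rw [weightedNoise_inr, integral_dotProduct fun k => (hW t t.is_lt k).integrable one_le_two]
    simp [hWmean t t.is_lt]

lemma sum_integral_weightedNoise_sq [IsFiniteMeasure μ] {Sig0 : Matrix (Fin d) (Fin d) ℝ}
    {Q : ℕ → Matrix (Fin d) (Fin d) ℝ} {R : ℕ → Matrix (Fin m) (Fin m) ℝ}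
    (hX0 : ∀ i, MemLp (fun ω => X0 ω i) 2 μ)
    (hB : ∀ t, 1 ≤ t → t ≤ T → ∀ i, MemLp (fun ω => B t ω i) 2 μ)
    (hW : ∀ t < T, ∀ j, MemLp (fun ω => W t ω j) 2 μ)
    (hX0cov : ∀ i i', ∫ ω, (X0 ω i - μ0 i) * (X0 ω i' - μ0 i') ∂μ = Sig0 i i')
    (hBcov : ∀ t, 1 ≤ t → t ≤ T → ∀ i i', ∫ ω, B t ω i * B t ω i' ∂μ = Q t i i')
    (hWcov : ∀ t < T, ∀ j j', ∫ ω, W t ω j * W t ω j' ∂μ = R t j j') :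
    ∑ i, ∫ ω, weightedNoise T d m μ0 y u X0 B W i ω ^ 2 ∂μ
      = y 0 ⬝ᵥ Sig0 *ᵥ y 0 + ∑ t ∈ Icc 1 T, y t ⬝ᵥ Q t *ᵥ y t
        + ∑ t ∈ range T, u t ⬝ᵥ R t *ᵥ u t := by
  refine sum_fin_succ_sum_fin_eq _ ?_ (fun j => ?_) (fun t => ?_)
  · exact integral_dotProduct_sq (G := fun ω => X0 ω - μ0)
      (fun k => (hX0 k).sub (memLp_const (μ0 k))) hX0cov (y 0)
  · exact integral_dotProduct_sq (hB _ (Nat.le_add_left 1 j) j.is_lt)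
      (hBcov _ (Nat.le_add_left 1 j) j.is_lt) (y (j + 1))
  · exact integral_dotProduct_sq (hW t t.is_lt) (hWcov t t.is_lt) (u t)

end Noise

theorem duality_principle_general
    (T d m : ℕ)
    {Ω : Type*} [MeasurableSpace Ω] (μ : Measure Ω) [IsProbabilityMeasure μ]
    (A : ℕ → ℕ → Matrix (Fin d) (Fin d) ℝ)
    (C : ℕ → Matrix (Fin m) (Fin d) ℝ)
    (X B : ℕ → Ω → Fin d → ℝ) (Z W : ℕ → Ω → Fin m → ℝ)
    (μ0 : Fin d → ℝ) (Sig0 : Matrix (Fin d) (Fin d) ℝ)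
    (Q : ℕ → Matrix (Fin d) (Fin d) ℝ) (R : ℕ → Matrix (Fin m) (Fin m) ℝ)
    -- measurability and mutual independence of `X_0, B_1, …, B_T, W_0, …, W_{T-1}`
    (hindep : iIndepFun (m := noiseMS T d m) (noiseFamily T d m (X 0) B W) μ)
    -- square integrability (componentwise)
    (hX0L2 : ∀ i, MemLp (fun ω => X 0 ω i) 2 μ)
    (hBL2 : ∀ t, 1 ≤ t → t ≤ T → ∀ i, MemLp (fun ω => B t ω i) 2 μ)
    (hWL2 : ∀ t < T, ∀ j, MemLp (fun ω => W t ω j) 2 μ)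
    -- first moments
    (hX0mean : ∀ i, (∫ ω, X 0 ω i ∂μ) = μ0 i)
    (hBmean : ∀ t, 1 ≤ t → t ≤ T → ∀ i, (∫ ω, B t ω i ∂μ) = 0)
    (hWmean : ∀ t < T, ∀ j, (∫ ω, W t ω j ∂μ) = 0)
    -- covariances
    (hX0cov : ∀ i i', (∫ ω, (X 0 ω i - μ0 i) * (X 0 ω i' - μ0 i') ∂μ) = Sig0 i i')
    (hBcov : ∀ t, 1 ≤ t → t ≤ T → ∀ i i',
      (∫ ω, B t ω i * B t ω i' ∂μ) = Q t i i')
    (hWcov : ∀ t < T, ∀ j j', (∫ ω, W t ω j * W t ω j' ∂μ) = R t j j')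
    -- the hidden-state recursion and the observation model
    (hX : ∀ t, 1 ≤ t → t ≤ T → ∀ ω,
      X t ω = (∑ s ∈ Finset.Icc 1 t, (A t s).mulVec (X (t - s) ω)) + B t ω)
    (hZ : ∀ t < T, ∀ ω, Z t ω = (C t).mulVec (X t ω) + W t ω)
    -- the control, terminal condition, and dual-state solution
    (u : ℕ → Fin m → ℝ) (f : Fin d → ℝ) (y : ℕ → Fin d → ℝ)
    (hy : IsDualSol T d m A C u f y) :
    dualCost T d m Sig0 Q R y u
      = ∫ ω, (1 / 2) * (f ⬝ᵥ X T ω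
          - (y 0 ⬝ᵥ μ0 - ∑ t ∈ Finset.range T, u t ⬝ᵥ Z t ω)) ^ 2 ∂μ := by
  have herror ω : f ⬝ᵥ X T ω - (y 0 ⬝ᵥ μ0 - ∑ t ∈ range T, u t ⬝ᵥ Z t ω)
      = ∑ i, weightedNoise T d m μ0 y u (X 0) B W i ω := by
    rw [hy.estimationError_eq (fun t h1 h2 => hX t h1 h2 ω) (fun t ht => hZ t ht ω),
      sum_weightedNoise]
  simp_rw [herror]
  rw [integral_const_mul, integral_sum_sq_of_pairwise_indepFun
      (memLp_weightedNoise hX0L2 hBL2 hWL2)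
      (integral_weightedNoise hX0L2 hBL2 hWL2 hX0mean hBmean hWmean)
      fun i j hij => (iIndepFun_weightedNoise hindep).indepFun hij,
    sum_integral_weightedNoise_sq hX0L2 hBL2 hWL2 hX0cov hBcov hWcov]
  simp only [dualCost, mul_add, mul_sum]

/-- Duality principle (Theorem 1): let `y` solve the backward difference equation with
control `u ∈ 𝒰` and terminal condition `y_T = f ∈ ℝ^d`, and define the estimator
`S_T := y_0ᵀ μ0 − ∑_{t=0}^{T-1} u_tᵀ Z_t`. Then the dual optimal control cost equals
the mean-squared prediction error: `J_T(u; f) = E[ ½ | fᵀ X_T − S_T |² ]`. -/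
theorem duality_principle
    (T d m : ℕ) (hT : 1 ≤ T) (hd : 1 ≤ d) (hm : 1 ≤ m)
    {Ω : Type*} [MeasurableSpace Ω] (μ : Measure Ω) [IsProbabilityMeasure μ]
    (A : ℕ → ℕ → Matrix (Fin d) (Fin d) ℝ)
    (C : ℕ → Matrix (Fin m) (Fin d) ℝ)
    (X B : ℕ → Ω → Fin d → ℝ) (Z W : ℕ → Ω → Fin m → ℝ)
    (μ0 : Fin d → ℝ) (Sig0 : Matrix (Fin d) (Fin d) ℝ)
    (Q : ℕ → Matrix (Fin d) (Fin d) ℝ) (R : ℕ → Matrix (Fin m) (Fin m) ℝ)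
    -- measurability and mutual independence of `X_0, B_1, …, B_T, W_0, …, W_{T-1}`
    (hmeas : ∀ i, @Measurable Ω (noiseType d m i) _ (noiseMS T d m i)
      (noiseFamily T d m (X 0) B W i))
    (hindep : iIndepFun (m := noiseMS T d m) (noiseFamily T d m (X 0) B W) μ)
    -- square integrability (componentwise)
    (hX0L2 : ∀ i, MemLp (fun ω => X 0 ω i) 2 μ)
    (hBL2 : ∀ t, 1 ≤ t → t ≤ T → ∀ i, MemLp (fun ω => B t ω i) 2 μ)
    (hWL2 : ∀ t < T, ∀ j, MemLp (fun ω => W t ω j) 2 μ)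
    -- first moments
    (hX0mean : ∀ i, (∫ ω, X 0 ω i ∂μ) = μ0 i)
    (hBmean : ∀ t, 1 ≤ t → t ≤ T → ∀ i, (∫ ω, B t ω i ∂μ) = 0)
    (hWmean : ∀ t < T, ∀ j, (∫ ω, W t ω j ∂μ) = 0)
    -- covariances
    (hX0cov : ∀ i i', (∫ ω, (X 0 ω i - μ0 i) * (X 0 ω i' - μ0 i') ∂μ) = Sig0 i i')
    (hBcov : ∀ t, 1 ≤ t → t ≤ T → ∀ i i',
      (∫ ω, B t ω i * B t ω i' ∂μ) = Q t i i')
    (hWcov : ∀ t < T, ∀ j j', (∫ ω, W t ω j * W t ω j' ∂μ) = R t j j')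
    -- the hidden-state recursion and the observation model
    (hX : ∀ t, 1 ≤ t → t ≤ T → ∀ ω,
      X t ω = (∑ s ∈ Finset.Icc 1 t, (A t s).mulVec (X (t - s) ω)) + B t ω)
    (hZ : ∀ t < T, ∀ ω, Z t ω = (C t).mulVec (X t ω) + W t ω)
    -- the control, terminal condition, and dual-state solution
    (u : ℕ → Fin m → ℝ) (f : Fin d → ℝ) (y : ℕ → Fin d → ℝ)
    (hy : IsDualSol T d m A C u f y) :
    dualCost T d m Sig0 Q R y u
      = ∫ ω, (1 / 2) * (f ⬝ᵥ X T ω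
          - (y 0 ⬝ᵥ μ0 - ∑ t ∈ Finset.range T, u t ⬝ᵥ Z t ω)) ^ 2 ∂μ :=
  duality_principle_general T d m μ A C X B Z W μ0 Sig0 Q R hindep hX0L2 hBL2 hWL2 hX0mean hBmean
    hWmean hX0cov hBcov hWcov hX hZ u f y hy
end

section
/- Adjoint (first-variation) identity: let u ∈ 𝒰 be a control with dual-state solution y for terminal condition f, and let p_0, …, p_T be the associated momentum, i.e. p_0 = Σ_0 y_0 and p_t = Σ_{s=1}^{t} A_{t,s} p_{t-s} + Q_t y_t for 1 ≤ t ≤ T. Then for every perturbation Δu ∈ 𝒰 with dual-state solution Δy for terminal condition 0, y_0^⊤ Σ_0 (Δy_0) + Σ_{t=1}^{T} y_t^⊤ Q_t (Δy_t) = Σ_{t=0}^{T-1} (C_t p_t)^⊤ (Δu_t); consequently I_T(u, Δu) = Σ_{t=0}^{T-1} ( C_t p_t + R_t u_t )^⊤ (Δu_t). -/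
open Matrix Finset

theorem Matrix.IsSymm.dotProduct_mulVec_comm {n α : Type*} [Fintype n] [CommSemiring α]
    {M : Matrix n n α} (hM : M.IsSymm) (v w : n → α) : v ⬝ᵥ M *ᵥ w = M *ᵥ v ⬝ᵥ w := by
  rw [dotProduct_comm (M *ᵥ v), ← dotProduct_transpose_mulVec, hM.eq]

theorem Finset.sum_range_sum_Icc_add {M : Type*} [AddCommMonoid M] (T : ℕ)
    (G : ℕ → ℕ → M) :
    ∑ t ∈ range T, ∑ s ∈ Icc 1 (T - t), G (t + s) s = ∑ t ∈ Icc 1 T, ∑ s ∈ Icc 1 t, G t s := by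
  rw [sum_sigma', sum_sigma']
  refine sum_nbij' (fun x => ⟨x.1 + x.2, x.2⟩) (fun x => ⟨x.1 - x.2, x.2⟩) ?_ ?_ ?_ ?_ ?_ <;>
    rintro ⟨t, s⟩ h <;> simp only [mem_sigma, mem_range, mem_Icc] at h ⊢
  · omega
  · omega
  · rw [Nat.add_sub_cancel]
  · rw [Nat.sub_add_cancel h.2.2]

theorem IsDualSol.sum_range_dotProduct {T d m : ℕ} {A : ℕ → ℕ → Matrix (Fin d) (Fin d) ℝ}
    {C : ℕ → Matrix (Fin m) (Fin d) ℝ} {u : ℕ → Fin m → ℝ} {f : Fin d → ℝ}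
    {y : ℕ → Fin d → ℝ} (hy : IsDualSol T d m A C u f y) (p : ℕ → Fin d → ℝ) :
    ∑ t ∈ range T, p t ⬝ᵥ y t
      = ∑ t ∈ Icc 1 T, (∑ s ∈ Icc 1 t, A t s *ᵥ p (t - s)) ⬝ᵥ y t
        + ∑ t ∈ range T, C t *ᵥ p t ⬝ᵥ u t := by
  have hpair : ∀ t ∈ range T, p t ⬝ᵥ y t
      = ∑ s ∈ Icc 1 (T - t), A (t + s) s *ᵥ p (t + s - s) ⬝ᵥ y (t + s) + C t *ᵥ p t ⬝ᵥ u t := by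
    intro t ht
    simp only [hy.2 t (mem_range.mp ht), dotProduct_add, dotProduct_sum,
      dotProduct_transpose_mulVec, Nat.add_sub_cancel]
    simp only [dotProduct_comm (y _), dotProduct_comm (u t)]
  rw [sum_congr rfl hpair, sum_add_distrib, sum_range_sum_Icc_add T
    (fun t s => A t s *ᵥ p (t - s) ⬝ᵥ y t)]
  simp only [sum_dotProduct]

theorem adjoint_first_variation_identity_general
    (T d m : ℕ)
    (A : ℕ → ℕ → Matrix (Fin d) (Fin d) ℝ)
    (C : ℕ → Matrix (Fin m) (Fin d) ℝ)
    (Sig0 : Matrix (Fin d) (Fin d) ℝ)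
    (Q : ℕ → Matrix (Fin d) (Fin d) ℝ) (R : ℕ → Matrix (Fin m) (Fin m) ℝ)
    (hSig0 : Sig0.IsSymm) (hQ : ∀ t, 1 ≤ t → t ≤ T → (Q t).IsSymm)
    (hR : ∀ t < T, (R t).IsSymm)
    (u : ℕ → Fin m → ℝ) (y : ℕ → Fin d → ℝ)
    -- the associated momentum process
    (p : ℕ → Fin d → ℝ)
    (hp0 : p 0 = Sig0.mulVec (y 0))
    (hp : ∀ t, 1 ≤ t → t ≤ T →
      p t = (∑ s ∈ Finset.Icc 1 t, (A t s).mulVec (p (t - s))) + (Q t).mulVec (y t)) :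
    ∀ (Δu : ℕ → Fin m → ℝ) (Δy : ℕ → Fin d → ℝ),
      IsDualSol T d m A C Δu 0 Δy →
      ((y 0 ⬝ᵥ Sig0.mulVec (Δy 0)) + (∑ t ∈ Finset.Icc 1 T, y t ⬝ᵥ (Q t).mulVec (Δy t))
          = ∑ t ∈ Finset.range T, (C t).mulVec (p t) ⬝ᵥ Δu t)
        ∧ ((y 0 ⬝ᵥ Sig0.mulVec (Δy 0))
            + (∑ t ∈ Finset.Icc 1 T, y t ⬝ᵥ (Q t).mulVec (Δy t))
            + (∑ t ∈ Finset.range T, u t ⬝ᵥ (R t).mulVec (Δu t))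
          = ∑ t ∈ Finset.range T, ((C t).mulVec (p t) + (R t).mulVec (u t)) ⬝ᵥ Δu t) := by
  intro Δu Δy hΔy
  have hmomentum : ∀ t ∈ Icc 1 T, y t ⬝ᵥ Q t *ᵥ Δy t
      = p t ⬝ᵥ Δy t - (∑ s ∈ Icc 1 t, A t s *ᵥ p (t - s)) ⬝ᵥ Δy t := by
    intro t ht
    obtain ⟨h1t, htT⟩ := mem_Icc.mp ht
    rw [(hQ t h1t htT).dotProduct_mulVec_comm, hp t h1t htT, add_dotProduct,
      add_sub_cancel_left]
  have hsplit : ∑ t ∈ range T, p t ⬝ᵥ Δy t = p 0 ⬝ᵥ Δy 0 + ∑ t ∈ Icc 1 T, p t ⬝ᵥ Δy t := by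
    rw [← Ico_add_one_right_eq_Icc,
      ← sum_range_eq_add_Ico (fun t => p t ⬝ᵥ Δy t) (Nat.add_one_pos T), sum_range_succ, hΔy.1,
      dotProduct_zero, add_zero]
  have hstate : y 0 ⬝ᵥ Sig0 *ᵥ Δy 0 + ∑ t ∈ Icc 1 T, y t ⬝ᵥ Q t *ᵥ Δy t
      = ∑ t ∈ range T, C t *ᵥ p t ⬝ᵥ Δu t := by
    rw [hSig0.dotProduct_mulVec_comm, ← hp0, sum_congr rfl hmomentum, sum_sub_distrib,
      ← add_sub_assoc, ← hsplit, hΔy.sum_range_dotProduct p, add_sub_cancel_left]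
  refine ⟨hstate, ?_⟩
  have hcost : ∀ t ∈ range T, u t ⬝ᵥ R t *ᵥ Δu t = R t *ᵥ u t ⬝ᵥ Δu t := fun t ht =>
    (hR t (mem_range.mp ht)).dotProduct_mulVec_comm (u t) (Δu t)
  rw [hstate, sum_congr rfl hcost, ← sum_add_distrib]
  simp only [add_dotProduct]

/-- Adjoint (first-variation) identity: let `u ∈ 𝒰` be a control with dual-state
solution `y` for terminal condition `f`, and let `p_0, …, p_T` be the associated
momentum, i.e. `p_0 = Σ0 y_0` and `p_t = ∑_{s=1}^{t} A_{t,s} p_{t-s} + Q_t y_t` for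
`1 ≤ t ≤ T`. Then for every perturbation `Δu ∈ 𝒰` with dual-state solution `Δy` for
terminal condition `0`,
`y_0ᵀ Σ0 (Δy_0) + ∑_{t=1}^{T} y_tᵀ Q_t (Δy_t) = ∑_{t=0}^{T-1} (C_t p_t)ᵀ (Δu_t)`;
consequently `I_T(u, Δu) = ∑_{t=0}^{T-1} (C_t p_t + R_t u_t)ᵀ (Δu_t)`. -/
theorem adjoint_first_variation_identity
    (T d m : ℕ) (hT : 1 ≤ T) (hd : 1 ≤ d) (hm : 1 ≤ m)
    (A : ℕ → ℕ → Matrix (Fin d) (Fin d) ℝ)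
    (C : ℕ → Matrix (Fin m) (Fin d) ℝ)
    (Sig0 : Matrix (Fin d) (Fin d) ℝ)
    (Q : ℕ → Matrix (Fin d) (Fin d) ℝ) (R : ℕ → Matrix (Fin m) (Fin m) ℝ)
    (hSig0 : Sig0.IsSymm) (hQ : ∀ t, 1 ≤ t → t ≤ T → (Q t).IsSymm)
    (hR : ∀ t < T, (R t).IsSymm)
    (u : ℕ → Fin m → ℝ) (f : Fin d → ℝ) (y : ℕ → Fin d → ℝ)
    (hy : IsDualSol T d m A C u f y)
    -- the associated momentum process
    (p : ℕ → Fin d → ℝ)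
    (hp0 : p 0 = Sig0.mulVec (y 0))
    (hp : ∀ t, 1 ≤ t → t ≤ T →
      p t = (∑ s ∈ Finset.Icc 1 t, (A t s).mulVec (p (t - s))) + (Q t).mulVec (y t)) :
    ∀ (Δu : ℕ → Fin m → ℝ) (Δy : ℕ → Fin d → ℝ),
      IsDualSol T d m A C Δu 0 Δy →
      ((y 0 ⬝ᵥ Sig0.mulVec (Δy 0)) + (∑ t ∈ Finset.Icc 1 T, y t ⬝ᵥ (Q t).mulVec (Δy t))
          = ∑ t ∈ Finset.range T, (C t).mulVec (p t) ⬝ᵥ Δu t)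
        ∧ ((y 0 ⬝ᵥ Sig0.mulVec (Δy 0))
            + (∑ t ∈ Finset.Icc 1 T, y t ⬝ᵥ (Q t).mulVec (Δy t))
            + (∑ t ∈ Finset.range T, u t ⬝ᵥ (R t).mulVec (Δu t))
          = ∑ t ∈ Finset.range T, ((C t).mulVec (p t) + (R t).mulVec (u t)) ⬝ᵥ Δu t) :=
  adjoint_first_variation_identity_general T d m A C Sig0 Q R hSig0 hQ hR u y p hp0 hp
end

section
/- Optimal control formula, sufficiency (Theorem 2): assume Σ_0 and each Q_t are positive semidefinite and each R_t is positive definite. Suppose (y, p, u*) satisfy the coupled forward–backward system: y_T = f and y_t = Σ_{s=1}^{T-t} A_{t+s,s}^⊤ y_{t+s} + C_t^⊤ u*_t for 0 ≤ t ≤ T-1 (backward); p_0 = Σ_0 y_0 and p_t = Σ_{s=1}^{t} A_{t,s} p_{t-s} + Q_t y_t for 1 ≤ t ≤ T (forward); and u*_t = − R_t^{-1} C_t p_t for 0 ≤ t ≤ T-1. Then u* is a global minimizer of the dual cost: J_T(u*; f) ≤ J_T(u; f) for all u ∈ 𝒰. -/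
open Matrix Finset

/-!
Both the cost and the backward equation are affine-quadratic in `(y, u)`, so for any admissible
`(y', u)` one has `J(y', u) = J(y, u*) + B + J(y' - y, u - u*)`, where `B` is the polarization
cross term and `J(y' - y, u - u*) ≥ 0` by semidefiniteness. Substituting `Σ0 y_0 = p_0`,
`Q_t y_t = p_t - ∑ A_{t,s} p_{t-s}` and `R_t u*_t = -C_t p_t` turns `B` into a summation by parts
between the homogeneous backward equation solved by `y' - y` and the forward recursion of `p`,
which vanishes.
-/

theorem Matrix.IsSymm.add_dotProduct_mulVec_add {R n : Type*} [CommSemiring R] [Fintype n]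
    {M : Matrix n n R} (hM : M.IsSymm) (a b : n → R) :
    (a + b) ⬝ᵥ M *ᵥ (a + b) = a ⬝ᵥ M *ᵥ a + 2 * (b ⬝ᵥ M *ᵥ a) + b ⬝ᵥ M *ᵥ b := by
  have hsymm : a ⬝ᵥ M *ᵥ b = b ⬝ᵥ M *ᵥ a := by
    rw [← dotProduct_transpose_mulVec, hM.eq]
  rw [mulVec_add, dotProduct_add, add_dotProduct, add_dotProduct, hsymm]
  ring

theorem Finset.sum_range_eq_add_sum_Icc_of_eq_zero {M : Type*} [AddCommMonoid M] {T : ℕ}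
    {g : ℕ → M} (hg : g T = 0) : ∑ t ∈ range T, g t = g 0 + ∑ t ∈ Icc 1 T, g t := by
  rw [← add_zero (∑ t ∈ range T, g t), ← hg, ← sum_range_succ, range_eq_Ico,
    sum_eq_sum_Ico_succ_bot T.add_one_pos, zero_add, Ico_add_one_right_eq_Icc]

/-- Both sides sum `G (t + s) s t` over the pairs `0 ≤ t < t + s ≤ T`. -/
theorem Finset.sum_range_sum_Icc_eq_sum_Icc_sum_Icc {M : Type*} [AddCommMonoid M] (T : ℕ)
    (G : ℕ → ℕ → ℕ → M) :
    ∑ t ∈ range T, ∑ s ∈ Icc 1 (T - t), G (t + s) s t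
      = ∑ r ∈ Icc 1 T, ∑ s ∈ Icc 1 r, G r s (r - s) := by
  rw [sum_sigma', sum_sigma']
  apply sum_nbij' (fun x => ⟨x.1 + x.2, x.2⟩) (fun x => ⟨x.1 - x.2, x.2⟩) <;>
    simp only [mem_sigma, mem_range, mem_Icc] <;>
    rintro ⟨a, b⟩ h <;> simp_all <;> omega

def dualCostBilin (T d m : ℕ) (Sig0 : Matrix (Fin d) (Fin d) ℝ)
    (Q : ℕ → Matrix (Fin d) (Fin d) ℝ) (R : ℕ → Matrix (Fin m) (Fin m) ℝ)
    (y : ℕ → Fin d → ℝ) (u : ℕ → Fin m → ℝ) (z : ℕ → Fin d → ℝ) (v : ℕ → Fin m → ℝ) : ℝ :=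
  z 0 ⬝ᵥ Sig0 *ᵥ y 0 + ∑ t ∈ Icc 1 T, z t ⬝ᵥ Q t *ᵥ y t + ∑ t ∈ range T, v t ⬝ᵥ R t *ᵥ u t

section DualCost

variable {T d m : ℕ} {Sig0 : Matrix (Fin d) (Fin d) ℝ} {Q : ℕ → Matrix (Fin d) (Fin d) ℝ}
  {R : ℕ → Matrix (Fin m) (Fin m) ℝ}

theorem dualCost_add (hSig0 : Sig0.IsSymm) (hQ : ∀ t ∈ Icc 1 T, (Q t).IsSymm)
    (hR : ∀ t ∈ range T, (R t).IsSymm) (y z : ℕ → Fin d → ℝ) (u v : ℕ → Fin m → ℝ) :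
    dualCost T d m Sig0 Q R (y + z) (u + v)
      = dualCost T d m Sig0 Q R y u + dualCostBilin T d m Sig0 Q R y u z v
        + dualCost T d m Sig0 Q R z v := by
  simp only [dualCost, dualCostBilin, Pi.add_apply, hSig0.add_dotProduct_mulVec_add]
  rw [sum_congr rfl fun t ht => congrArg _ ((hQ t ht).add_dotProduct_mulVec_add (y t) (z t)),
    sum_congr rfl fun t ht => congrArg _ ((hR t ht).add_dotProduct_mulVec_add (u t) (v t))]
  simp only [mul_add, sum_add_distrib, ← mul_sum]
  ring

theorem dualCost_nonneg (hSig0 : Sig0.PosSemidef) (hQ : ∀ t ∈ Icc 1 T, (Q t).PosSemidef)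
    (hR : ∀ t ∈ range T, (R t).PosSemidef) (y : ℕ → Fin d → ℝ) (u : ℕ → Fin m → ℝ) :
    0 ≤ dualCost T d m Sig0 Q R y u := by
  have quad_nonneg {n : ℕ} {M : Matrix (Fin n) (Fin n) ℝ} (hM : M.PosSemidef) (x : Fin n → ℝ) :
      0 ≤ 1 / 2 * (x ⬝ᵥ M *ᵥ x) := by
    simpa using hM.dotProduct_mulVec_nonneg x
  exact add_nonneg
    (add_nonneg (quad_nonneg hSig0 _) (sum_nonneg fun t ht => quad_nonneg (hQ t ht) _))
    (sum_nonneg fun t ht => quad_nonneg (hR t ht) _)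

end DualCost

section IsDualSol

variable {T d m : ℕ} {A : ℕ → ℕ → Matrix (Fin d) (Fin d) ℝ} {C : ℕ → Matrix (Fin m) (Fin d) ℝ}

theorem IsDualSol.sub {u u' : ℕ → Fin m → ℝ} {f f' : Fin d → ℝ} {y y' : ℕ → Fin d → ℝ}
    (h : IsDualSol T d m A C u f y) (h' : IsDualSol T d m A C u' f' y') :
    IsDualSol T d m A C (u - u') (f - f') (y - y') := by
  refine ⟨by rw [Pi.sub_apply, h.1, h'.1], fun t ht => ?_⟩
  simp only [Pi.sub_apply, h.2 t ht, h'.2 t ht, mulVec_sub, sum_sub_distrib]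
  abel

/-- Summation by parts; the bracket is the forcing `q_t` of `p` in the forward recursion
`p_t = ∑_{s=1}^{t} A_{t,s} p_{t-s} + q_t`. -/
theorem IsDualSol.duality {v : ℕ → Fin m → ℝ} {z : ℕ → Fin d → ℝ}
    (hz : IsDualSol T d m A C v 0 z) (p : ℕ → Fin d → ℝ) :
    z 0 ⬝ᵥ p 0 + ∑ t ∈ Icc 1 T, z t ⬝ᵥ (p t - ∑ s ∈ Icc 1 t, A t s *ᵥ p (t - s))
      = ∑ t ∈ range T, v t ⬝ᵥ C t *ᵥ p t := by
  have hstep : ∀ t ∈ range T, z t ⬝ᵥ p t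
      = ∑ s ∈ Icc 1 (T - t), z (t + s) ⬝ᵥ A (t + s) s *ᵥ p t + v t ⬝ᵥ C t *ᵥ p t := by
    intro t ht
    rw [hz.2 t (mem_range.1 ht), add_dotProduct, sum_dotProduct]
    simp only [dotProduct_comm _ (p t), dotProduct_transpose_mulVec]
  have hsum := (sum_congr rfl hstep).symm.trans
    (sum_range_eq_add_sum_Icc_of_eq_zero (g := fun t => z t ⬝ᵥ p t) (by simp [hz.1]))
  rw [sum_add_distrib, sum_range_sum_Icc_eq_sum_Icc_sum_Icc T
    (fun r s t => z r ⬝ᵥ A r s *ᵥ p t)] at hsum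
  simp only [dotProduct_sub, dotProduct_sum, sum_sub_distrib]
  linear_combination -hsum

end IsDualSol

theorem optimal_control_sufficiency_general
    (T d m : ℕ)
    (A : ℕ → ℕ → Matrix (Fin d) (Fin d) ℝ)
    (C : ℕ → Matrix (Fin m) (Fin d) ℝ)
    (Sig0 : Matrix (Fin d) (Fin d) ℝ)
    (Q : ℕ → Matrix (Fin d) (Fin d) ℝ) (R : ℕ → Matrix (Fin m) (Fin m) ℝ)
    (hSig0 : Sig0.PosSemidef) (hQ : ∀ t, 1 ≤ t → t ≤ T → (Q t).PosSemidef)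
    (hR : ∀ t < T, (R t).PosDef)
    (f : Fin d → ℝ) (ustar : ℕ → Fin m → ℝ) (y p : ℕ → Fin d → ℝ)
    -- backward equation
    (hy : IsDualSol T d m A C ustar f y)
    -- forward (momentum) equation
    (hp0 : p 0 = Sig0.mulVec (y 0))
    (hp : ∀ t, 1 ≤ t → t ≤ T →
      p t = (∑ s ∈ Finset.Icc 1 t, (A t s).mulVec (p (t - s))) + (Q t).mulVec (y t))
    -- optimal control formula
    (hustar : ∀ t < T, ustar t = -((R t)⁻¹.mulVec ((C t).mulVec (p t)))) :
    ∀ (u : ℕ → Fin m → ℝ) (y' : ℕ → Fin d → ℝ),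
      IsDualSol T d m A C u f y' →
      dualCost T d m Sig0 Q R y ustar ≤ dualCost T d m Sig0 Q R y' u := by
  intro u y' hy'
  have hQ' : ∀ t ∈ Icc 1 T, (Q t).PosSemidef :=
    fun t ht => hQ t (mem_Icc.1 ht).1 (mem_Icc.1 ht).2
  have hR' : ∀ t ∈ range T, (R t).PosDef := fun t ht => hR t (mem_range.1 ht)
  have hQy : ∀ t ∈ Icc 1 T, Q t *ᵥ y t = p t - ∑ s ∈ Icc 1 t, A t s *ᵥ p (t - s) :=
    fun t ht => by rw [hp t (mem_Icc.1 ht).1 (mem_Icc.1 ht).2, add_sub_cancel_left]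
  have hRu : ∀ t ∈ range T, R t *ᵥ ustar t = -(C t *ᵥ p t) := fun t ht => by
    rw [hustar t (mem_range.1 ht), mulVec_neg, mulVec_mulVec,
      mul_nonsing_inv _ ((isUnit_iff_isUnit_det _).1 (hR' t ht).isUnit), one_mulVec]
  have hδ : IsDualSol T d m A C (u - ustar) 0 (y' - y) := sub_self f ▸ hy'.sub hy
  have hcross : dualCostBilin T d m Sig0 Q R y ustar (y' - y) (u - ustar) = 0 := by
    simp only [dualCostBilin, ← hp0, sum_congr rfl fun t ht => congrArg _ (hQy t ht),
      sum_congr rfl fun t ht => congrArg _ (hRu t ht), dotProduct_neg, sum_neg_distrib,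
      hδ.duality p, add_neg_cancel]
  have hexpand := dualCost_add (isHermitian_iff_isSymm.1 hSig0.1)
    (fun t ht => isHermitian_iff_isSymm.1 (hQ' t ht).1)
    (fun t ht => isHermitian_iff_isSymm.1 (hR' t ht).1) y (y' - y) ustar (u - ustar)
  rw [add_sub_cancel, add_sub_cancel, hcross, add_zero] at hexpand
  rw [hexpand]
  exact le_add_of_nonneg_right
    (dualCost_nonneg hSig0 hQ' (fun t ht => (hR' t ht).posSemidef) _ _)

/-- Optimal control formula, sufficiency (Theorem 2): assume `Σ0` and each `Q_t` are
positive semidefinite and each `R_t` is positive definite. Suppose `(y, p, u*)` satisfy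
the coupled forward–backward system: `y_T = f` and
`y_t = ∑_{s=1}^{T-t} A_{t+s,s}ᵀ y_{t+s} + C_tᵀ u*_t` for `0 ≤ t ≤ T-1` (backward);
`p_0 = Σ0 y_0` and `p_t = ∑_{s=1}^{t} A_{t,s} p_{t-s} + Q_t y_t` for `1 ≤ t ≤ T`
(forward); and `u*_t = − R_t⁻¹ C_t p_t` for `0 ≤ t ≤ T-1`. Then `u*` is a global
minimizer of the dual cost: `J_T(u*; f) ≤ J_T(u; f)` for all `u ∈ 𝒰`. -/
theorem optimal_control_sufficiency
    (T d m : ℕ) (hT : 1 ≤ T) (hd : 1 ≤ d) (hm : 1 ≤ m)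
    (A : ℕ → ℕ → Matrix (Fin d) (Fin d) ℝ)
    (C : ℕ → Matrix (Fin m) (Fin d) ℝ)
    (Sig0 : Matrix (Fin d) (Fin d) ℝ)
    (Q : ℕ → Matrix (Fin d) (Fin d) ℝ) (R : ℕ → Matrix (Fin m) (Fin m) ℝ)
    (hSig0 : Sig0.PosSemidef) (hQ : ∀ t, 1 ≤ t → t ≤ T → (Q t).PosSemidef)
    (hR : ∀ t < T, (R t).PosDef)
    (f : Fin d → ℝ) (ustar : ℕ → Fin m → ℝ) (y p : ℕ → Fin d → ℝ)
    -- backward equation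
    (hy : IsDualSol T d m A C ustar f y)
    -- forward (momentum) equation
    (hp0 : p 0 = Sig0.mulVec (y 0))
    (hp : ∀ t, 1 ≤ t → t ≤ T →
      p t = (∑ s ∈ Finset.Icc 1 t, (A t s).mulVec (p (t - s))) + (Q t).mulVec (y t))
    -- optimal control formula
    (hustar : ∀ t < T, ustar t = -((R t)⁻¹.mulVec ((C t).mulVec (p t)))) :
    ∀ (u : ℕ → Fin m → ℝ) (y' : ℕ → Fin d → ℝ),
      IsDualSol T d m A C u f y' →
      dualCost T d m Sig0 Q R y ustar ≤ dualCost T d m Sig0 Q R y' u :=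
  optimal_control_sufficiency_general T d m A C Sig0 Q R hSig0 hQ hR f ustar y p hy hp0 hp hustar
end

section
/- Optimal control formula, necessity (stationarity condition): assume Σ_0 and each Q_t are symmetric and each R_t is symmetric. If u* ∈ 𝒰 minimizes J_T(·; f) over 𝒰, then, with y the dual-state solution for (u*, f) and p the associated momentum (p_0 = Σ_0 y_0, p_t = Σ_{s=1}^{t} A_{t,s} p_{t-s} + Q_t y_t for 1 ≤ t ≤ T), one has C_t p_t + R_t u*_t = 0 for every 0 ≤ t ≤ T-1. -/
open Matrix Finset

noncomputable def gSeq (d : ℕ) (B : ℕ → ℕ → Matrix (Fin d) (Fin d) ℝ)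
    (w0 : Fin d → ℝ) : ℕ → Fin d → ℝ
  | 0 => w0
  | (k+1) => ∑ r ∈ (Finset.Icc 1 (k+1)).attach,
      (B (k+1) r.1).mulVec (gSeq d B w0 (k + 1 - r.1))
  decreasing_by
    have h1 := (Finset.mem_Icc.mp r.2).1
    have h2 := (Finset.mem_Icc.mp r.2).2
    omega

lemma gSeq_zero (d : ℕ) (B : ℕ → ℕ → Matrix (Fin d) (Fin d) ℝ) (w0 : Fin d → ℝ) :
    gSeq d B w0 0 = w0 := by rw [gSeq]

lemma gSeq_succ (d : ℕ) (B : ℕ → ℕ → Matrix (Fin d) (Fin d) ℝ)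
    (w0 : Fin d → ℝ) (k : ℕ) :
    gSeq d B w0 (k+1)
      = ∑ r ∈ Finset.Icc 1 (k+1), (B (k+1) r).mulVec (gSeq d B w0 (k + 1 - r)) := by
  rw [gSeq]
  exact Finset.sum_attach (Finset.Icc 1 (k+1)) (fun r => (B (k+1) r).mulVec (gSeq d B w0 (k + 1 - r)))

lemma linear_coeff_zero (b c : ℝ) (h : ∀ ε : ℝ, 0 ≤ ε * b + ε^2 * c) : b = 0 := by
  by_contra hb
  have hb2 : 0 < b^2 := by positivity
  have h1 : ∀ δ : ℝ, 0 < δ → 1 ≤ δ * c := by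
    intro δ hδ
    by_contra hcon
    push_neg at hcon
    have h2 := h (-(δ * b))
    have h3 : 0 < (1 - δ * c) * (δ * b^2) := by
      apply mul_pos (by linarith) (by positivity)
    nlinarith
  have hc : 1 ≤ c := by simpa using h1 1 one_pos
  have hc0 : 0 < c := by linarith
  have := h1 (1/(2*c)) (by positivity)
  have : (1/(2*c)) * c = 1/2 := by field_simp
  linarith [h1 (1/(2*c)) (by positivity : (0:ℝ) < 1/(2*c))]

lemma symm_dot {n : ℕ} {M : Matrix (Fin n) (Fin n) ℝ} (hM : M.IsSymm)
    (x z : Fin n → ℝ) : x ⬝ᵥ M.mulVec z = M.mulVec x ⬝ᵥ z := by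
  rw [Matrix.dotProduct_mulVec, ← Matrix.vecMul_transpose, hM.eq]

lemma trans_dot {n k : ℕ} (M : Matrix (Fin k) (Fin n) ℝ)
    (x : Fin n → ℝ) (z : Fin k → ℝ) : x ⬝ᵥ Mᵀ.mulVec z = M.mulVec x ⬝ᵥ z := by
  rw [Matrix.dotProduct_mulVec, Matrix.vecMul_transpose]

lemma sum_dot {n : ℕ} {ι : Type*} (s : Finset ι) (g : ι → (Fin n → ℝ)) (z : Fin n → ℝ) :
    (∑ i ∈ s, g i) ⬝ᵥ z = ∑ i ∈ s, g i ⬝ᵥ z := by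
  induction s using Finset.cons_induction with
  | empty => simp
  | cons a s ha ih => simp [Finset.sum_cons, add_dotProduct, ih]

lemma dot_sum {n : ℕ} {ι : Type*} (s : Finset ι) (z : Fin n → ℝ) (g : ι → (Fin n → ℝ)) :
    z ⬝ᵥ (∑ i ∈ s, g i) = ∑ i ∈ s, z ⬝ᵥ g i := by
  induction s using Finset.cons_induction with
  | empty => simp
  | cons a s ha ih => simp [Finset.sum_cons, dotProduct_add, ih]

lemma quad_expand {n : ℕ} (M : Matrix (Fin n) (Fin n) ℝ) (hM : M.IsSymm)
    (x z : Fin n → ℝ) (ε : ℝ) :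
    (1/2) * ((x + ε • z) ⬝ᵥ M.mulVec (x + ε • z))
      = (1/2) * (x ⬝ᵥ M.mulVec x) + ε * (x ⬝ᵥ M.mulVec z)
        + ε^2 * ((1/2) * (z ⬝ᵥ M.mulVec z)) := by
  have hsym : z ⬝ᵥ M.mulVec x = x ⬝ᵥ M.mulVec z := by
    rw [symm_dot hM, dotProduct_comm]
  simp only [Matrix.mulVec_add, Matrix.mulVec_smul, dotProduct_add, add_dotProduct,
    dotProduct_smul, smul_dotProduct, smul_eq_mul, hsym]
  ring

lemma double_sum_reindex (t : ℕ) (F : ℕ → ℕ → ℝ) :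
    ∑ s ∈ Finset.range t, ∑ r ∈ Finset.Icc 1 (t - s), F (s + r) r
      = ∑ s ∈ Finset.Icc 1 t, ∑ r ∈ Finset.Icc 1 s, F s r := by
  rw [Finset.sum_sigma', Finset.sum_sigma']
  refine Finset.sum_nbij' (fun x => ⟨x.1 + x.2, x.2⟩) (fun x => ⟨x.1 - x.2, x.2⟩)
    ?_ ?_ ?_ ?_ ?_
  · rintro ⟨s, r⟩ ha
    simp only [Finset.mem_sigma, Finset.mem_range, Finset.mem_Icc] at ha ⊢
    omega
  · rintro ⟨s, r⟩ ha
    simp only [Finset.mem_sigma, Finset.mem_range, Finset.mem_Icc] at ha ⊢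
    omega
  · rintro ⟨s, r⟩ ha
    simp only [Finset.mem_sigma, Finset.mem_range, Finset.mem_Icc] at ha
    simp only [Sigma.mk.inj_iff, heq_eq_eq, and_true]
    omega
  · rintro ⟨s, r⟩ ha
    simp only [Finset.mem_sigma, Finset.mem_range, Finset.mem_Icc] at ha
    simp only [Sigma.mk.inj_iff, heq_eq_eq, and_true]
    omega
  · rintro ⟨s, r⟩ ha
    rfl

/-- Optimal control formula, necessity (stationarity condition): assume `Σ0` and each
`Q_t` are symmetric and each `R_t` is symmetric. If `u* ∈ 𝒰` minimizes `J_T(·; f)`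
over `𝒰`, then, with `y` the dual-state solution for `(u*, f)` and `p` the associated
momentum (`p_0 = Σ0 y_0`, `p_t = ∑_{s=1}^{t} A_{t,s} p_{t-s} + Q_t y_t` for
`1 ≤ t ≤ T`), one has `C_t p_t + R_t u*_t = 0` for every `0 ≤ t ≤ T-1`. -/
theorem optimal_control_necessity
    (T d m : ℕ) (hT : 1 ≤ T) (hd : 1 ≤ d) (hm : 1 ≤ m)
    (A : ℕ → ℕ → Matrix (Fin d) (Fin d) ℝ)
    (C : ℕ → Matrix (Fin m) (Fin d) ℝ)
    (Sig0 : Matrix (Fin d) (Fin d) ℝ)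
    (Q : ℕ → Matrix (Fin d) (Fin d) ℝ) (R : ℕ → Matrix (Fin m) (Fin m) ℝ)
    (hSig0 : Sig0.IsSymm) (hQ : ∀ t, 1 ≤ t → t ≤ T → (Q t).IsSymm)
    (hR : ∀ t < T, (R t).IsSymm)
    (f : Fin d → ℝ) (ustar : ℕ → Fin m → ℝ) (y p : ℕ → Fin d → ℝ)
    -- `y` is the dual-state solution for `(u*, f)`
    (hy : IsDualSol T d m A C ustar f y)
    -- `u*` minimizes the dual cost over all controls
    (hmin : ∀ (u : ℕ → Fin m → ℝ) (y' : ℕ → Fin d → ℝ),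
      IsDualSol T d m A C u f y' →
      dualCost T d m Sig0 Q R y ustar ≤ dualCost T d m Sig0 Q R y' u)
    -- the associated momentum process
    (hp0 : p 0 = Sig0.mulVec (y 0))
    (hp : ∀ t, 1 ≤ t → t ≤ T →
      p t = (∑ s ∈ Finset.Icc 1 t, (A t s).mulVec (p (t - s))) + (Q t).mulVec (y t)) :
    ∀ t < T, (C t).mulVec (p t) + (R t).mulVec (ustar t) = 0 := by
  intro t ht
  have htT : t ≤ T := le_of_lt ht
  have key : ∀ v : Fin m → ℝ, ((C t).mulVec (p t) + (R t).mulVec (ustar t)) ⬝ᵥ v = 0 := by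
    intro v
    set w : ℕ → Fin d → ℝ := fun s =>
      if s ≤ t then gSeq d (fun k r => (A (t - k + r) r)ᵀ) (((C t)ᵀ).mulVec v) (t - s) else 0
      with hwdef
    have hwt : w t = ((C t)ᵀ).mulVec v := by
      rw [hwdef]
      simp [gSeq_zero]
    have hwgt : ∀ s, t < s → w s = 0 := by
      intro s hs
      rw [hwdef]
      simp [Nat.not_le.mpr hs]
    have hwlt : ∀ s, s < t →
        w s = ∑ r ∈ Finset.Icc 1 (t - s), ((A (s+r) r)ᵀ).mulVec (w (s+r)) := by
      intro s hs
      have hk : t - s = (t - s - 1) + 1 := by omega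
      have hws : w s = gSeq d (fun k r => (A (t - k + r) r)ᵀ) (((C t)ᵀ).mulVec v) (t - s) := by
        rw [hwdef]; simp [le_of_lt hs]
      rw [hws, hk, gSeq_succ, ← hk]
      apply Finset.sum_congr rfl
      intro r hr
      rw [Finset.mem_Icc] at hr
      have h1 : t - (t - s) + r = s + r := by omega
      have h2 : t - s - r = t - (s + r) := by omega
      have h3 : s + r ≤ t := by omega
      rw [h1, h2]
      congr 1
      rw [hwdef]; simp [h3]
    have hweq : ∀ s, s < T → w s
        = (∑ r ∈ Finset.Icc 1 (T - s), ((A (s+r) r)ᵀ).mulVec (w (s+r)))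
          + (if s = t then ((C t)ᵀ).mulVec v else 0) := by
      intro s hs
      rcases lt_trichotomy s t with h | h | h
      · rw [if_neg (by omega), add_zero, hwlt s h]
        apply Finset.sum_subset
        · apply Finset.Icc_subset_Icc_right; omega
        · intro r hr hnr
          rw [Finset.mem_Icc] at hr hnr
          rw [hwgt _ (by omega), Matrix.mulVec_zero]
      · subst h
        rw [if_pos rfl, hwt]
        have hz : ∑ r ∈ Finset.Icc 1 (T - s), ((A (s+r) r)ᵀ).mulVec (w (s+r)) = 0 := by
          apply Finset.sum_eq_zero
          intro r hr; rw [Finset.mem_Icc] at hr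
          rw [hwgt _ (by omega), Matrix.mulVec_zero]
        rw [hz, zero_add]
      · rw [if_neg (by omega), add_zero, hwgt s h]
        symm
        apply Finset.sum_eq_zero
        intro r hr; rw [Finset.mem_Icc] at hr
        rw [hwgt _ (by omega), Matrix.mulVec_zero]
    have hsol : ∀ ε : ℝ, IsDualSol T d m A C
        (fun s => if s = t then ustar t + ε • v else ustar s) f
        (fun s => y s + ε • w s) := by
      intro ε
      constructor
      · show y T + ε • w T = f
        rw [hy.1, hwgt T ht, smul_zero, add_zero]
      · intro s hs
        show y s + ε • w s
          = (∑ r ∈ Finset.Icc 1 (T - s), ((A (s+r) r)ᵀ).mulVec (y (s+r) + ε • w (s+r)))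
            + ((C s)ᵀ).mulVec (if s = t then ustar t + ε • v else ustar s)
        have h1 := hy.2 s hs
        have h2 := hweq s hs
        by_cases hst : s = t
        · subst hst
          rw [if_pos rfl] at h2 ⊢
          rw [h1, h2]
          simp only [Matrix.mulVec_add, Matrix.mulVec_smul, Finset.sum_add_distrib,
            smul_add, Finset.smul_sum]
          abel
        · rw [if_neg hst] at h2 ⊢
          rw [add_zero] at h2
          rw [h1, h2]
          simp only [Matrix.mulVec_add, Matrix.mulVec_smul, Finset.sum_add_distrib,
            smul_add, Finset.smul_sum]
          abel
    set b : ℝ := (y 0 ⬝ᵥ Sig0.mulVec (w 0))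
        + (∑ s ∈ Finset.Icc 1 T, y s ⬝ᵥ (Q s).mulVec (w s))
        + (ustar t ⬝ᵥ (R t).mulVec v) with hbdef
    set c : ℝ := (1/2) * (w 0 ⬝ᵥ Sig0.mulVec (w 0))
        + (∑ s ∈ Finset.Icc 1 T, (1/2) * (w s ⬝ᵥ (Q s).mulVec (w s)))
        + (1/2) * (v ⬝ᵥ (R t).mulVec v) with hcdef
    have hcost : ∀ ε : ℝ,
        dualCost T d m Sig0 Q R (fun s => y s + ε • w s)
          (fun s => if s = t then ustar t + ε • v else ustar s)
          = dualCost T d m Sig0 Q R y ustar + ε * b + ε^2 * c := by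
      intro ε
      simp only [dualCost]
      have e1 := quad_expand Sig0 hSig0 (y 0) (w 0) ε
      have e2 : ∀ s ∈ Finset.Icc 1 T,
          (1/2 : ℝ) * ((y s + ε • w s) ⬝ᵥ (Q s).mulVec (y s + ε • w s))
          = (1/2)*(y s ⬝ᵥ (Q s).mulVec (y s)) + ε * (y s ⬝ᵥ (Q s).mulVec (w s))
            + ε^2 * ((1/2)*(w s ⬝ᵥ (Q s).mulVec (w s))) := by
        intro s hs; rw [Finset.mem_Icc] at hs
        exact quad_expand (Q s) (hQ s hs.1 hs.2) _ _ ε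
      have e3 : ∑ s ∈ Finset.range T,
          (1/2 : ℝ) * ((if s = t then ustar t + ε • v else ustar s) ⬝ᵥ
            (R s).mulVec (if s = t then ustar t + ε • v else ustar s))
          = (∑ s ∈ Finset.range T, (1/2) * (ustar s ⬝ᵥ (R s).mulVec (ustar s)))
            + ε * (ustar t ⬝ᵥ (R t).mulVec v) + ε^2 * ((1/2)*(v ⬝ᵥ (R t).mulVec v)) := by
        have htm : t ∈ Finset.range T := Finset.mem_range.mpr ht
        rw [← Finset.add_sum_erase _ _ htm,
          ← Finset.add_sum_erase _ (fun s => (1/2 : ℝ) * (ustar s ⬝ᵥ (R s).mulVec (ustar s))) htm]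
        have herase : ∑ s ∈ (Finset.range T).erase t,
            (1/2 : ℝ) * ((if s = t then ustar t + ε • v else ustar s) ⬝ᵥ
              (R s).mulVec (if s = t then ustar t + ε • v else ustar s))
            = ∑ s ∈ (Finset.range T).erase t, (1/2)*(ustar s ⬝ᵥ (R s).mulVec (ustar s)) := by
          apply Finset.sum_congr rfl
          intro s hs
          rw [if_neg (Finset.mem_erase.mp hs).1]
        rw [herase, if_pos rfl, quad_expand (R t) (hR t ht) (ustar t) v ε]
        ring
      have e2' : ∑ s ∈ Finset.Icc 1 T,
          (1/2 : ℝ) * ((y s + ε • w s) ⬝ᵥ (Q s).mulVec (y s + ε • w s))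
          = (∑ s ∈ Finset.Icc 1 T, (1/2)*(y s ⬝ᵥ (Q s).mulVec (y s)))
            + ε * (∑ s ∈ Finset.Icc 1 T, y s ⬝ᵥ (Q s).mulVec (w s))
            + ε^2 * (∑ s ∈ Finset.Icc 1 T, (1/2)*(w s ⬝ᵥ (Q s).mulVec (w s))) := by
        rw [Finset.sum_congr rfl e2, Finset.sum_add_distrib, Finset.sum_add_distrib,
          Finset.mul_sum, Finset.mul_sum]
      rw [e1, e2', e3, hbdef, hcdef]
      ring
    have hb0 : b = 0 := by
      apply linear_coeff_zero b c
      intro ε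
      have hle := hmin _ _ (hsol ε)
      rw [hcost ε] at hle
      linarith
    have hbid : b = ((C t).mulVec (p t) + (R t).mulVec (ustar t)) ⬝ᵥ v := by
      have h3 : ustar t ⬝ᵥ (R t).mulVec v = (R t).mulVec (ustar t) ⬝ᵥ v := symm_dot (hR t ht) _ _
      have h0 : y 0 ⬝ᵥ Sig0.mulVec (w 0) = p 0 ⬝ᵥ w 0 := by
        rw [symm_dot hSig0, ← hp0]
      have htrunc : ∑ s ∈ Finset.Icc 1 T, y s ⬝ᵥ (Q s).mulVec (w s)
          = ∑ s ∈ Finset.Icc 1 t, y s ⬝ᵥ (Q s).mulVec (w s) := by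
        symm
        apply Finset.sum_subset (Finset.Icc_subset_Icc_right htT)
        intro s hs hns
        rw [Finset.mem_Icc] at hs hns
        rw [hwgt s (by omega), Matrix.mulVec_zero, dotProduct_zero]
      have hsub : ∀ s ∈ Finset.Icc 1 t, y s ⬝ᵥ (Q s).mulVec (w s)
          = p s ⬝ᵥ w s - ∑ r ∈ Finset.Icc 1 s, ((A s r).mulVec (p (s - r))) ⬝ᵥ w s := by
        intro s hs; rw [Finset.mem_Icc] at hs
        have hps := hp s hs.1 (le_trans hs.2 htT)
        rw [symm_dot (hQ s hs.1 (le_trans hs.2 htT))]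
        have hQy : (Q s).mulVec (y s)
            = p s - ∑ r ∈ Finset.Icc 1 s, (A s r).mulVec (p (s - r)) := by
          rw [hps]; abel
        rw [hQy, sub_dotProduct, sum_dot]
      have hrange : p 0 ⬝ᵥ w 0 + ∑ s ∈ Finset.Icc 1 t, p s ⬝ᵥ w s
          = ∑ s ∈ Finset.range (t+1), p s ⬝ᵥ w s := by
        have hIcc : Finset.range (t+1) = Finset.Icc 0 t := by
          rw [← Finset.Ico_add_one_right_eq_Icc, Finset.range_eq_Ico]
        have hIoc : Finset.Icc 1 t = Finset.Ioc 0 t := by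
          ext x; simp [Finset.mem_Icc, Finset.mem_Ioc]; omega
        rw [hIcc, Finset.Icc_eq_cons_Ioc (Nat.zero_le t), Finset.sum_cons, hIoc]
      have hstep : ∑ s ∈ Finset.range (t+1), p s ⬝ᵥ w s
          = p t ⬝ᵥ w t + ∑ s ∈ Finset.range t, p s ⬝ᵥ w s := by
        rw [Finset.sum_range_succ]; ring
      have hlow : ∑ s ∈ Finset.range t, p s ⬝ᵥ w s
          = ∑ s ∈ Finset.Icc 1 t, ∑ r ∈ Finset.Icc 1 s, ((A s r).mulVec (p (s - r))) ⬝ᵥ w s := by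
        rw [← double_sum_reindex t (fun s' r => ((A s' r).mulVec (p (s' - r))) ⬝ᵥ w s')]
        apply Finset.sum_congr rfl
        intro s hs; rw [Finset.mem_range] at hs
        rw [hwlt s hs, dot_sum]
        apply Finset.sum_congr rfl
        intro r hr
        rw [trans_dot, Nat.add_sub_cancel]
      have hfin : p t ⬝ᵥ w t = (C t).mulVec (p t) ⬝ᵥ v := by
        rw [hwt, trans_dot]
      rw [hbdef, h0, h3, htrunc, Finset.sum_congr rfl hsub, Finset.sum_sub_distrib,
        ← hlow, add_dotProduct]
      linarith [hrange, hstep, hfin]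
    rw [hbid] at hb0
    exact hb0
  have hkey := key ((C t).mulVec (p t) + (R t).mulVec (ustar t))
  exact dotProduct_self_eq_zero.mp hkey
end
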